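/- Let H be a real inner product space, and for u, v ∈ H with ‖u‖ ≤ 1, the estimate |(‖v + u‖² + 1)^{θ/2} - (‖v‖² + 1)^{θ/2} - θ⟨v, u⟩/(‖v‖² + 1)^{1-θ/2}| ≤ C‖u‖² holds for some constant C depending only on θ ∈ (0, 2]. -/
import Mathlib

open RealInnerProductSpace

lemma rpow_lip {p m : ℝ} (hp : 0 < p) (hp1 : p ≤ 1) (hm : 1 ≤ m)
    {x y : ℝ} (hx : m ≤ x) (hy : m ≤ y) :
    |x ^ (p - 1) - y ^ (p - 1)| ≤ (1 - p) * m ^ (p - 2) * |x - y| := by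
  have hm0 : (0 : ℝ) < m := lt_of_lt_of_le one_pos hm
  have key := Convex.norm_image_sub_le_of_norm_hasDerivWithin_le
    (f := fun z : ℝ => z ^ (p - 1)) (f' := fun z : ℝ => (p - 1) * z ^ (p - 2))
    (s := Set.Ici m) (C := (1 - p) * m ^ (p - 2))
    (fun z hz => by
      have h := (Real.hasDerivAt_rpow_const (p := p - 1)
        (Or.inl (ne_of_gt (lt_of_lt_of_le hm0 hz)))).hasDerivWithinAt (s := Set.Ici m)
      rwa [show p - 1 - 1 = p - 2 by ring] at h)
    (fun z hz => by
      rw [Real.norm_eq_abs, abs_mul, abs_of_nonpos (by linarith),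
        abs_of_nonneg (Real.rpow_nonneg (le_trans hm0.le hz) _)]
      have : z ^ (p - 2) ≤ m ^ (p - 2) :=
        Real.rpow_le_rpow_of_nonpos hm0 hz (by linarith)
      nlinarith)
    (convex_Ici m) hy hx
  simpa [Real.norm_eq_abs, abs_sub_comm x y] using key

lemma rpow_taylor {p m : ℝ} (hp : 0 < p) (hp1 : p ≤ 1) (hm : 1 ≤ m)
    {a b : ℝ} (ha : m ≤ a) (hb : m ≤ b) :
    |b ^ p - a ^ p - p * a ^ (p - 1) * (b - a)| ≤ p * (1 - p) * m ^ (p - 2) * (b - a) ^ 2 := by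
  have hm0 : (0 : ℝ) < m := lt_of_lt_of_le one_pos hm
  have hsub : Set.uIcc a b ⊆ Set.Ici m := fun z hz => le_trans (le_inf ha hb) hz.1
  have key := Convex.norm_image_sub_le_of_norm_hasDerivWithin_le
    (f := fun z : ℝ => z ^ p - p * a ^ (p - 1) * z)
    (f' := fun z : ℝ => p * z ^ (p - 1) - p * a ^ (p - 1))
    (s := Set.uIcc a b) (C := p * ((1 - p) * m ^ (p - 2) * |b - a|))
    (fun z hz => by
      have h : HasDerivAt (fun z : ℝ => z ^ p - p * a ^ (p - 1) * z)
          (p * z ^ (p - 1) - p * a ^ (p - 1) * 1) z :=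
        (Real.hasDerivAt_rpow_const
          (Or.inl (ne_of_gt (lt_of_lt_of_le hm0 (hsub hz))))).sub
          ((hasDerivAt_id z).const_mul (p * a ^ (p - 1)))
      simpa using h.hasDerivWithinAt)
    (fun z hz => by
      have hz1 : m ≤ z := hsub hz
      have hlip := rpow_lip hp hp1 hm hz1 ha
      have hza : |z - a| ≤ |b - a| := by
        rcases Set.mem_uIcc.mp hz with ⟨h1, h2⟩ | ⟨h1, h2⟩
        · rw [abs_of_nonneg (by linarith), abs_of_nonneg (by linarith)]; linarith
        · rw [abs_of_nonpos (by linarith), abs_of_nonpos (by linarith)]; linarith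
      have hnn : 0 ≤ (1 - p) * m ^ (p - 2) :=
        mul_nonneg (by linarith) (Real.rpow_nonneg hm0.le _)
      have h2 : |z ^ (p - 1) - a ^ (p - 1)| ≤ (1 - p) * m ^ (p - 2) * |b - a| :=
        le_trans hlip (mul_le_mul_of_nonneg_left hza hnn)
      rw [Real.norm_eq_abs]
      calc |p * z ^ (p - 1) - p * a ^ (p - 1)| = p * |z ^ (p - 1) - a ^ (p - 1)| := by
            rw [← mul_sub, abs_mul, abs_of_pos hp]
        _ ≤ p * ((1 - p) * m ^ (p - 2) * |b - a|) :=
            mul_le_mul_of_nonneg_left h2 hp.le)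
    (convex_uIcc a b) Set.left_mem_uIcc Set.right_mem_uIcc
  rw [Real.norm_eq_abs, Real.norm_eq_abs] at key
  calc |b ^ p - a ^ p - p * a ^ (p - 1) * (b - a)|
      = |(b ^ p - p * a ^ (p - 1) * b) - (a ^ p - p * a ^ (p - 1) * a)| := by
        congr 1; ring
    _ ≤ p * ((1 - p) * m ^ (p - 2) * |b - a|) * |b - a| := key
    _ = p * (1 - p) * m ^ (p - 2) * (b - a) ^ 2 := by
        rw [show (b - a) ^ 2 = |b - a| * |b - a| by rw [abs_mul_abs_self]; ring]; ring

set_option maxHeartbeats 1000000 in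
lemma real_version (p : ℝ) (hp : 0 < p) (hp1 : p ≤ 1) (r nu w i : ℝ)
    (hr : 0 ≤ r) (hnu : 0 ≤ nu) (hnu1 : nu ≤ 1) (hw : 0 ≤ w)
    (hexp : w ^ 2 = r ^ 2 + 2 * i + nu ^ 2) (hi : |i| ≤ r * nu) (hwlb : r - 1 ≤ w) :
    |(w ^ 2 + 1) ^ p - (r ^ 2 + 1) ^ p - 2 * p * i / (r ^ 2 + 1) ^ (1 - p)|
      ≤ 55 * nu ^ 2 := by
  set m : ℝ := max 1 ((r ^ 2 + 1) / 9) with hmdef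
  have hm1 : (1 : ℝ) ≤ m := le_max_left _ _
  have hm9 : (r ^ 2 + 1) / 9 ≤ m := le_max_right _ _
  have hm0 : (0 : ℝ) < m := lt_of_lt_of_le one_pos hm1
  have ha1 : (1 : ℝ) ≤ r ^ 2 + 1 := by nlinarith
  have ha0 : (0 : ℝ) < r ^ 2 + 1 := by positivity
  have hma : m ≤ r ^ 2 + 1 := max_le ha1 (by linarith)
  have hmb : m ≤ w ^ 2 + 1 := by
    apply max_le
    · nlinarith
    · rcases le_or_gt r 1 with hcase | hcase
      · nlinarith
      · have h2 : (r - 1) ^ 2 ≤ w ^ 2 := by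
          nlinarith [mul_nonneg (sub_nonneg.mpr hwlb) (by linarith : (0:ℝ) ≤ w + (r - 1))]
        nlinarith [sq_nonneg (8 * r - 9)]
  have key := rpow_taylor hp hp1 hm1 hma hmb
  have hdiv : 2 * p * i / (r ^ 2 + 1) ^ (1 - p) = 2 * p * i * (r ^ 2 + 1) ^ (p - 1) := by
    rw [show p - 1 = -(1 - p) by ring, Real.rpow_neg ha0.le, div_eq_mul_inv]
  have htarget : (w ^ 2 + 1) ^ p - (r ^ 2 + 1) ^ p - 2 * p * i / (r ^ 2 + 1) ^ (1 - p)
      = ((w ^ 2 + 1) ^ p - (r ^ 2 + 1) ^ p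
          - p * (r ^ 2 + 1) ^ (p - 1) * ((w ^ 2 + 1) - (r ^ 2 + 1)))
        + p * (r ^ 2 + 1) ^ (p - 1) * nu ^ 2 := by
    rw [hdiv, hexp]; ring
  have hap1 : (r ^ 2 + 1) ^ (p - 1) ≤ 1 :=
    Real.rpow_le_one_of_one_le_of_nonpos ha1 (by linarith)
  have hap0 : 0 ≤ (r ^ 2 + 1) ^ (p - 1) := Real.rpow_nonneg ha0.le _
  have hmp2 : m ^ (p - 2) ≤ 9 / (r ^ 2 + 1) := by
    have h1 : m ^ (p - 2) ≤ m ^ (-1 : ℝ) :=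
      Real.rpow_le_rpow_of_exponent_le hm1 (by linarith)
    rw [Real.rpow_neg_one] at h1
    have h2 : m⁻¹ ≤ ((r ^ 2 + 1) / 9)⁻¹ := inv_anti₀ (by positivity) hm9
    rw [inv_div] at h2
    linarith
  have hsq : ((w ^ 2 + 1) - (r ^ 2 + 1)) ^ 2 ≤ (2 * r + 1) ^ 2 * nu ^ 2 := by
    have h : (w ^ 2 + 1) - (r ^ 2 + 1) = 2 * i + nu ^ 2 := by rw [hexp]; ring
    rw [h]
    have h1 : i ≤ r * nu := le_trans (le_abs_self i) hi
    have h2 : -(r * nu) ≤ i := by linarith [neg_abs_le i]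
    have h3 : i ^ 2 ≤ r ^ 2 * nu ^ 2 := by nlinarith
    have h4 : i * nu ^ 2 ≤ r * nu ^ 2 := by
      have h5 : i * nu ^ 2 ≤ r * nu * nu ^ 2 := mul_le_mul_of_nonneg_right h1 (sq_nonneg nu)
      nlinarith [mul_nonneg hr (mul_nonneg hnu hnu)]
    have h7 : nu ^ 2 ≤ 1 := by nlinarith
    have h6 : nu ^ 4 ≤ nu ^ 2 := by
      nlinarith [mul_le_mul_of_nonneg_right h7 (sq_nonneg nu)]
    nlinarith
  have hmain : p * (1 - p) * m ^ (p - 2) * ((w ^ 2 + 1) - (r ^ 2 + 1)) ^ 2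
      ≤ 54 * nu ^ 2 := by
    have hmp0 : 0 ≤ m ^ (p - 2) := Real.rpow_nonneg hm0.le _
    have h3 : m ^ (p - 2) * ((w ^ 2 + 1) - (r ^ 2 + 1)) ^ 2
        ≤ (9 / (r ^ 2 + 1)) * ((2 * r + 1) ^ 2 * nu ^ 2) :=
      mul_le_mul hmp2 hsq (sq_nonneg _) (by positivity)
    have h4 : (9 / (r ^ 2 + 1)) * ((2 * r + 1) ^ 2 * nu ^ 2) ≤ 54 * nu ^ 2 := by
      rw [div_mul_eq_mul_div, div_le_iff₀ (by positivity)]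
      nlinarith [sq_nonneg (nu * (r - 1)), sq_nonneg nu, sq_nonneg (r - 1)]
    have hp14 : p * (1 - p) ≤ 1 := by nlinarith
    have hp140 : 0 ≤ p * (1 - p) := by nlinarith
    calc p * (1 - p) * m ^ (p - 2) * ((w ^ 2 + 1) - (r ^ 2 + 1)) ^ 2
        = p * (1 - p) * (m ^ (p - 2) * ((w ^ 2 + 1) - (r ^ 2 + 1)) ^ 2) := by ring
      _ ≤ 1 * (54 * nu ^ 2) := by
          exact mul_le_mul hp14 (le_trans h3 h4) (by positivity) one_pos.le
      _ = 54 * nu ^ 2 := by ring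
  have hsecond : p * (r ^ 2 + 1) ^ (p - 1) * nu ^ 2 ≤ nu ^ 2 := by
    have h8 : p * (r ^ 2 + 1) ^ (p - 1) ≤ 1 := by nlinarith
    nlinarith [mul_le_mul_of_nonneg_right h8 (sq_nonneg nu)]
  have hsecond0 : 0 ≤ p * (r ^ 2 + 1) ^ (p - 1) * nu ^ 2 := by positivity
  calc |(w ^ 2 + 1) ^ p - (r ^ 2 + 1) ^ p - 2 * p * i / (r ^ 2 + 1) ^ (1 - p)|
      ≤ |(w ^ 2 + 1) ^ p - (r ^ 2 + 1) ^ p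
          - p * (r ^ 2 + 1) ^ (p - 1) * ((w ^ 2 + 1) - (r ^ 2 + 1))|
        + |p * (r ^ 2 + 1) ^ (p - 1) * nu ^ 2| := by rw [htarget]; exact abs_add_le _ _
    _ ≤ 54 * nu ^ 2 + nu ^ 2 := by
        rw [abs_of_nonneg hsecond0]
        exact add_le_add (le_trans key hmain) hsecond
    _ = 55 * nu ^ 2 := by ring

/-- Second-order Taylor remainder estimate for `f(v) = (‖v‖²+1)^(θ/2)`:
for `θ ∈ (0,2]` there is `C > 0` such that for all `u, v` with `‖u‖ ≤ 1`,
`|(‖v+u‖²+1)^(θ/2) - (‖v‖²+1)^(θ/2) - θ⟨v,u⟩/(‖v‖²+1)^(1-θ/2)| ≤ C‖u‖²`. -/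
theorem taylor_remainder_estimate {H : Type*} [NormedAddCommGroup H]
    [InnerProductSpace ℝ H] (θ : ℝ) (hθ : θ ∈ Set.Ioc (0 : ℝ) 2) :
    ∃ C > 0, ∀ u v : H, ‖u‖ ≤ 1 →
      |(‖v + u‖ ^ 2 + 1) ^ (θ / 2) - (‖v‖ ^ 2 + 1) ^ (θ / 2)
        - θ * ⟪v, u⟫ / (‖v‖ ^ 2 + 1) ^ (1 - θ / 2)| ≤ C * ‖u‖ ^ 2 := by
  obtain ⟨hθ0, hθ2⟩ := hθ
  refine ⟨55, by norm_num, fun u v hu => ?_⟩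
  have hwlb : ‖v‖ - 1 ≤ ‖v + u‖ := by
    have h := norm_sub_le (v + u) u
    rw [add_sub_cancel_right] at h
    linarith
  have h := real_version (θ / 2) (by linarith) (by linarith) ‖v‖ ‖u‖ ‖v + u‖ ⟪v, u⟫
    (norm_nonneg v) (norm_nonneg u) hu (norm_nonneg _)
    (norm_add_sq_real v u) (abs_real_inner_le_norm v u) hwlb
  rw [show (2 : ℝ) * (θ / 2) * ⟪v, u⟫ = θ * ⟪v, u⟫ by ring] at h
  exact h
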